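/- Let g : ℕ → ℂ be a bounded sequence in the Wiener space W with spectral measure σ_g, and for each n ≥ 1 let σ_{g,n} be the measure on 𝕋 with density ρ_{g,n}(x) = |n^{−1/2} ∑_{j=0}^{n−1} g(j) e^{ijx}|² with respect to dx/2π. Then for every k ∈ ℤ, σ̂_{g,n}(k) → σ̂_g(k) as n → ∞; in particular the sequence of finite measures (σ_{g,n}) converges weakly to σ_g. Moreover, for k ≥ 0, |(1/n) ∑_{j=0}^{n−1} g(j+k)·conjugate(g(j)) − σ̂_{g,n}(k)| ≤ (k/n)·(sup_j |g(j)|)². -/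

import Mathlib

open MeasureTheory Filter Finset

instance : Fact (0 < 2 * Real.pi) := ⟨by positivity⟩

/-- The Fourier coefficient `σ̂(k) = ∫ e^{-ikx} dσ(x)` of a measure on the circle
`𝕋 = ℝ/2πℤ`. -/
noncomputable def fourierCoeffMeasure (σ : Measure (AddCircle (2 * Real.pi))) (k : ℤ) : ℂ :=
  ∫ x, fourier (-k) x ∂σ

/-- The measure `σ_{g,n}` on the circle with density
`ρ_{g,n}(x) = |n^{-1/2} ∑_{j<n} g(j) e^{ijx}|²` with respect to `dx/2π`. -/
noncomputable def sigmaApprox (g : ℕ → ℂ) (n : ℕ) : Measure (AddCircle (2 * Real.pi)) :=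
  (volume : Measure (AddCircle (2 * Real.pi))).withDensity fun x =>
    ENNReal.ofReal (‖(Real.sqrt n)⁻¹ • ∑ j ∈ Finset.range n, g j * fourier j x‖ ^ 2
      / (2 * Real.pi))

/-!
Writing `S_n = ∑_{j<n} g(j) e_j`, the density of `σ_{g,n}` is `|S_n|² / (2πn)`; expanding the
square and integrating against `e_{-k}` gives `σ̂_{g,n}(k) = n⁻¹ ∑_{j<n-k} g(j+k) ḡ(j)` for `k ≥ 0`,
which differs from the Cesàro correlation average only by the `k` boundary terms `n - k ≤ j < n`.
Negative `k` follow by conjugation. Weak convergence follows from convergence of the Fourier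
coefficients: the masses `σ̂_{g,n}(0)` are bounded, so `f ↦ ∫ f dσ_{g,n}` is an equi-Lipschitz
family on `C(𝕋, ℂ)`, whence the set of `f` on which it converges is closed; it contains the dense
span of the characters.
-/

open ComplexConjugate Topology

theorem Continuous.integrable_of_compactSpace {X E : Type*} [TopologicalSpace X] [CompactSpace X]
    [MeasurableSpace X] [OpensMeasurableSpace X] [NormedAddCommGroup E] {μ : Measure X}
    [IsFiniteMeasure μ] {f : X → E} (hf : Continuous f) : Integrable f μ :=
  hf.integrable_of_hasCompactSupport (HasCompactSupport.of_compactSpace f)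

theorem lipschitzWith_integral_continuousMap {X E : Type*} [TopologicalSpace X] [CompactSpace X]
    [MeasurableSpace X] [OpensMeasurableSpace X] [NormedAddCommGroup E] [NormedSpace ℝ E]
    (μ : Measure X) [IsFiniteMeasure μ] :
    LipschitzWith (μ Set.univ).toNNReal fun f : C(X, E) => ∫ x, f x ∂μ := by
  refine LipschitzWith.of_dist_le_mul fun f f' => ?_
  rw [dist_eq_norm, dist_eq_norm, ← integral_sub (f.continuous.integrable_of_compactSpace)
    (f'.continuous.integrable_of_compactSpace), ENNReal.coe_toNNReal_eq_toReal, mul_comm]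
  exact norm_integral_le_of_norm_le_const
    (ae_of_all _ fun x => (f - f').norm_coe_le_norm x)

section Circle

variable {T : ℝ}

theorem ofReal_norm_sum_mul_fourier_sq (s : Finset ℕ) (a : ℕ → ℂ) (x : AddCircle T) :
    ((‖∑ j ∈ s, a j * fourier j x‖ ^ 2 : ℝ) : ℂ)
      = ∑ j ∈ s, ∑ l ∈ s, a j * conj (a l) * fourier ((j : ℤ) - l) x := by
  rw [Complex.ofReal_pow, ← Complex.mul_conj', map_sum, sum_mul_sum]
  refine sum_congr rfl fun j _ => sum_congr rfl fun l _ => ?_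
  rw [map_mul, ← fourier_neg, sub_eq_add_neg, fourier_add]
  ring

variable [Fact (0 < T)]

theorem integral_fourier_haarAddCircle (m : ℤ) :
    ∫ x : AddCircle T, fourier m x ∂AddCircle.haarAddCircle = if m = 0 then 1 else 0 := by
  split_ifs with hm
  · simp [hm]
  · exact integral_eq_zero_of_add_right_eq_neg (fourier_add_half_inv_index hm Fact.out)

theorem integral_fourier_volume (m : ℤ) :
    ∫ x : AddCircle T, fourier m x = if m = 0 then (T : ℂ) else 0 := by
  rw [AddCircle.volume_eq_smul_haarAddCircle, integral_smul_measure,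
    integral_fourier_haarAddCircle, ENNReal.toReal_ofReal (Fact.out : (0 : ℝ) < T).le]
  split_ifs <;> simp [Complex.real_smul]

end Circle

theorem fourierCoeffMeasure_neg (μ : Measure (AddCircle (2 * Real.pi))) (k : ℤ) :
    fourierCoeffMeasure μ (-k) = conj (fourierCoeffMeasure μ k) := by
  simp only [fourierCoeffMeasure, ← integral_conj, ← fourier_neg, neg_neg]

theorem fourierCoeffMeasure_zero (μ : Measure (AddCircle (2 * Real.pi))) :
    fourierCoeffMeasure μ 0 = μ.real Set.univ := by
  simp [fourierCoeffMeasure]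

theorem sigmaApprox_density_eq (g : ℕ → ℂ) (n : ℕ) (x : AddCircle (2 * Real.pi)) :
    ‖(Real.sqrt n)⁻¹ • ∑ j ∈ range n, g j * fourier j x‖ ^ 2 / (2 * Real.pi)
      = (2 * Real.pi * n)⁻¹ * ‖∑ j ∈ range n, g j * fourier j x‖ ^ 2 := by
  rw [norm_smul, mul_pow, norm_inv, Real.norm_of_nonneg (Real.sqrt_nonneg _), inv_pow,
    Real.sq_sqrt n.cast_nonneg]
  ring

instance isFiniteMeasure_sigmaApprox (g : ℕ → ℂ) (n : ℕ) : IsFiniteMeasure (sigmaApprox g n) :=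
  isFiniteMeasure_withDensity_ofReal
    (Continuous.integrable_of_compactSpace (by fun_prop)).hasFiniteIntegral

theorem fourierCoeffMeasure_sigmaApprox (g : ℕ → ℂ) (n : ℕ) (k : ℤ) :
    fourierCoeffMeasure (sigmaApprox g n) k
      = (n : ℂ)⁻¹ * ∑ j ∈ range n, ∑ l ∈ range n,
          if (j : ℤ) - l = k then g j * conj (g l) else 0 := by
  have hρ : Measurable fun x : AddCircle (2 * Real.pi) =>
      ENNReal.ofReal (‖(Real.sqrt n)⁻¹ • ∑ j ∈ range n, g j * fourier j x‖ ^ 2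
        / (2 * Real.pi)) :=
    (Continuous.measurable (by fun_prop)).ennreal_ofReal
  rw [fourierCoeffMeasure, sigmaApprox, integral_withDensity_eq_integral_toReal_smul hρ
    (ae_of_all _ fun _ => ENNReal.ofReal_lt_top)]
  have hexpand : ∀ x : AddCircle (2 * Real.pi),
      (ENNReal.ofReal (‖(Real.sqrt n)⁻¹ • ∑ j ∈ range n, g j * fourier j x‖ ^ 2
        / (2 * Real.pi))).toReal • fourier (-k) x
      = ∑ j ∈ range n, ∑ l ∈ range n,
          (2 * Real.pi * n : ℂ)⁻¹ * (g j * conj (g l)) * fourier ((j : ℤ) - l - k) x := by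
    intro x
    rw [ENNReal.toReal_ofReal (by positivity), sigmaApprox_density_eq, Complex.real_smul,
      Complex.ofReal_mul, ofReal_norm_sum_mul_fourier_sq, mul_sum, sum_mul]
    refine sum_congr rfl fun j _ => ?_
    rw [mul_sum, sum_mul]
    refine sum_congr rfl fun l _ => ?_
    rw [sub_eq_add_neg _ (k : ℤ), fourier_add]
    push_cast
    ring
  have hint : ∀ j l : ℕ, Integrable (fun x : AddCircle (2 * Real.pi) =>
      (2 * Real.pi * n : ℂ)⁻¹ * (g j * conj (g l)) * fourier ((j : ℤ) - l - k) x) :=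
    fun j l => Continuous.integrable_of_compactSpace (by fun_prop)
  simp_rw [hexpand]
  rw [integral_finsetSum _ fun j _ => integrable_finsetSum _ fun l _ => hint j l, mul_sum]
  refine sum_congr rfl fun j _ => ?_
  rw [integral_finsetSum _ fun l _ => hint j l, mul_sum]
  refine sum_congr rfl fun l _ => ?_
  rw [integral_const_mul, integral_fourier_volume]
  simp only [sub_eq_zero]
  split_ifs
  · push_cast
    field_simp
  · simp

noncomputable def correlationMean (g : ℕ → ℂ) (k N : ℕ) : ℂ :=
  (N : ℂ)⁻¹ * ∑ j ∈ range N, g (j + k) * conj (g j)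

theorem fourierCoeffMeasure_sigmaApprox_natCast (g : ℕ → ℂ) (n k : ℕ) :
    fourierCoeffMeasure (sigmaApprox g n) k
      = (n : ℂ)⁻¹ * ∑ j ∈ range (n - k), g (j + k) * conj (g j) := by
  rw [fourierCoeffMeasure_sigmaApprox, sum_comm]
  congr 1
  calc ∑ l ∈ range n, ∑ j ∈ range n, (if (j : ℤ) - l = k then g j * conj (g l) else 0)
      = ∑ l ∈ range n, if l + k ∈ range n then g (l + k) * conj (g l) else 0 := by
        refine sum_congr rfl fun l _ => ?_
        simp only [sub_eq_iff_eq_add, ← Nat.cast_add, Nat.cast_inj, add_comm k l]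
        exact sum_ite_eq' (range n) (l + k) fun j => g j * conj (g l)
    _ = ∑ l ∈ range (n - k), g (l + k) * conj (g l) := by
        rw [← sum_filter]
        congr 1
        ext l
        simp only [mem_filter, mem_range]
        omega

theorem norm_correlationMean_sub_fourierCoeffMeasure_sigmaApprox_le {g : ℕ → ℂ}
    (hbd : BddAbove (Set.range fun j => ‖g j‖)) (k n : ℕ) :
    ‖correlationMean g k n - fourierCoeffMeasure (sigmaApprox g n) k‖
      ≤ (k / n) * (⨆ j, ‖g j‖) ^ 2 := by
  set M := ⨆ j, ‖g j‖
  have hterm : ∀ j, ‖g (j + k) * conj (g j)‖ ≤ M ^ 2 := fun j => by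
    rw [norm_mul, RCLike.norm_conj, sq]
    exact mul_le_mul (le_ciSup hbd _) (le_ciSup hbd _) (norm_nonneg _)
      ((norm_nonneg _).trans (le_ciSup hbd 0))
  rw [correlationMean, fourierCoeffMeasure_sigmaApprox_natCast, ← mul_sub,
    ← sum_Ico_eq_sub _ (n.sub_le k), norm_mul, norm_inv, Complex.norm_natCast, div_eq_inv_mul,
    mul_assoc]
  gcongr
  calc ‖∑ j ∈ Ico (n - k) n, g (j + k) * conj (g j)‖
      ≤ (Ico (n - k) n).card * M ^ 2 := by
        simpa using norm_sum_le_of_le (Ico (n - k) n) fun j _ => hterm j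
    _ ≤ k * M ^ 2 := by
        gcongr
        rw [Nat.card_Ico]
        omega

theorem tendsto_fourierCoeffMeasure_sigmaApprox_natCast {g : ℕ → ℂ}
    (hbd : BddAbove (Set.range fun j => ‖g j‖)) {k : ℕ} {c : ℂ}
    (hc : Tendsto (correlationMean g k) atTop (𝓝 c)) :
    Tendsto (fun n => fourierCoeffMeasure (sigmaApprox g n) k) atTop (𝓝 c) := by
  have hdiff : Tendsto (fun n => correlationMean g k n - fourierCoeffMeasure (sigmaApprox g n) k)
      atTop (𝓝 0) := by
    refine squeeze_zero_norm (norm_correlationMean_sub_fourierCoeffMeasure_sigmaApprox_le hbd k) ?_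
    simpa using (tendsto_const_div_atTop_nhds_zero_nat (k : ℝ)).mul_const ((⨆ j, ‖g j‖) ^ 2)
  simpa using hc.sub hdiff

theorem tendsto_fourierCoeffMeasure_sigmaApprox {g : ℕ → ℂ}
    (hbd : BddAbove (Set.range fun j => ‖g j‖)) {σ : Measure (AddCircle (2 * Real.pi))}
    (hσ : ∀ k : ℕ, Tendsto (correlationMean g k) atTop (𝓝 (fourierCoeffMeasure σ k))) (k : ℤ) :
    Tendsto (fun n => fourierCoeffMeasure (sigmaApprox g n) k) atTop
      (𝓝 (fourierCoeffMeasure σ k)) := by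
  obtain ⟨k, rfl | rfl⟩ := k.eq_nat_or_neg
  · exact tendsto_fourierCoeffMeasure_sigmaApprox_natCast hbd (hσ k)
  · simp only [fourierCoeffMeasure_neg]
    exact (Complex.continuous_conj.tendsto _).comp
      (tendsto_fourierCoeffMeasure_sigmaApprox_natCast hbd (hσ k))

section WeakConvergence

variable {μ : ℕ → Measure (AddCircle (2 * Real.pi))} [∀ n, IsFiniteMeasure (μ n)]
  {ν : Measure (AddCircle (2 * Real.pi))} [IsFiniteMeasure ν]

theorem tendsto_integral_of_mem_span_fourier
    (h : ∀ k, Tendsto (fun n => fourierCoeffMeasure (μ n) k) atTop (𝓝 (fourierCoeffMeasure ν k)))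
    {f : C(AddCircle (2 * Real.pi), ℂ)} (hf : f ∈ Submodule.span ℂ (Set.range fourier)) :
    Tendsto (fun n => ∫ x, f x ∂μ n) atTop (𝓝 (∫ x, f x ∂ν)) := by
  induction hf using Submodule.span_induction with
  | mem f hf =>
    obtain ⟨m, rfl⟩ := hf
    simpa [fourierCoeffMeasure] using h (-m)
  | zero => simp
  | add f f' _ _ hf hf' =>
    simp only [ContinuousMap.coe_add, Pi.add_apply, integral_add
      f.continuous.integrable_of_compactSpace f'.continuous.integrable_of_compactSpace]
    exact hf.add hf'
  | smul a f _ hf =>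
    simpa only [ContinuousMap.coe_smul, Pi.smul_apply, integral_smul] using hf.const_smul a

theorem tendsto_integral_of_tendsto_fourierCoeffMeasure
    (h : ∀ k, Tendsto (fun n => fourierCoeffMeasure (μ n) k) atTop (𝓝 (fourierCoeffMeasure ν k)))
    (f : C(AddCircle (2 * Real.pi), ℂ)) :
    Tendsto (fun n => ∫ x, f x ∂μ n) atTop (𝓝 (∫ x, f x ∂ν)) := by
  obtain ⟨C, hC⟩ : BddAbove (Set.range fun n => (μ n).real Set.univ) := by
    have h0 := h 0
    simp only [fourierCoeffMeasure_zero] at h0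
    exact (tendsto_ofReal_iff.mp h0).bddAbove_range
  have hequi : Equicontinuous fun n (f : C(AddCircle (2 * Real.pi), ℂ)) => ∫ x, f x ∂μ n := by
    refine (LipschitzWith.uniformEquicontinuous _ C.toNNReal fun n =>
      (lipschitzWith_integral_continuousMap (μ n)).weaken ?_).equicontinuous
    rw [← Real.toNNReal_coe (r := (μ n Set.univ).toNNReal), ENNReal.coe_toNNReal_eq_toReal]
    exact Real.toNNReal_le_toNNReal (hC (Set.mem_range_self n))
  have hclosed := hequi.isClosed_setOfPred_tendsto (l := atTop)
    (lipschitzWith_integral_continuousMap ν).continuous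
  have hdense : f ∈ closure (Submodule.span ℂ (Set.range (@fourier (2 * Real.pi))) :
      Set C(AddCircle (2 * Real.pi), ℂ)) := by
    rw [← Submodule.topologicalClosure_coe, span_fourier_closure_eq_top]
    trivial
  exact closure_minimal (fun f hf => tendsto_integral_of_mem_span_fourier h hf) hclosed hdense

theorem tendsto_integral_real_of_tendsto_fourierCoeffMeasure
    (h : ∀ k, Tendsto (fun n => fourierCoeffMeasure (μ n) k) atTop (𝓝 (fourierCoeffMeasure ν k)))
    (φ : C(AddCircle (2 * Real.pi), ℝ)) :
    Tendsto (fun n => ∫ x, φ x ∂μ n) atTop (𝓝 (∫ x, φ x ∂ν)) := by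
  have := tendsto_integral_of_tendsto_fourierCoeffMeasure h
    ((⟨Complex.ofReal, Complex.continuous_ofReal⟩ : C(ℝ, ℂ)).comp φ)
  simp only [ContinuousMap.comp_apply, ContinuousMap.coe_mk, integral_complex_ofReal] at this
  exact tendsto_ofReal_iff.mp this

end WeakConvergence

/-- For a bounded sequence `g` in the Wiener space with spectral measure `σ_g`, the
Fourier coefficients of `σ_{g,n}` converge to those of `σ_g` (so `σ_{g,n} → σ_g` weakly),
and `|(1/n) ∑_{j=0}^{n-1} g(j+k) conj(g(j)) − σ̂_{g,n}(k)| ≤ (k/n)(sup_j |g(j)|)²`. -/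
theorem sigmaApprox_converges_to_spectral_measure
    (g : ℕ → ℂ) (hbd : BddAbove (Set.range fun j => ‖g j‖)) (c : ℕ → ℂ)
    (hc : ∀ k : ℕ, Tendsto (fun N : ℕ => (N : ℂ)⁻¹ * ∑ n ∈ Finset.range N,
      g (n + k) * (starRingEnd ℂ) (g n)) atTop (nhds (c k)))
    (σg : Measure (AddCircle (2 * Real.pi))) [IsFiniteMeasure σg]
    (hσg : ∀ k : ℕ, fourierCoeffMeasure σg k = c k) :
    (∀ k : ℤ, Tendsto (fun n : ℕ => fourierCoeffMeasure (sigmaApprox g n) k)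
        atTop (nhds (fourierCoeffMeasure σg k))) ∧
    (∀ φ : C(AddCircle (2 * Real.pi), ℝ),
      Tendsto (fun n : ℕ => ∫ x, φ x ∂(sigmaApprox g n)) atTop (nhds (∫ x, φ x ∂σg))) ∧
    (∀ (k n : ℕ), 0 < n →
      ‖(n : ℂ)⁻¹ * (∑ j ∈ Finset.range n, g (j + k) * (starRingEnd ℂ) (g j))
          - fourierCoeffMeasure (sigmaApprox g n) k‖
        ≤ ((k : ℝ) / n) * (⨆ j, ‖g j‖) ^ 2) := by
  have hcoeff := tendsto_fourierCoeffMeasure_sigmaApprox hbd (σ := σg) fun k => hσg k ▸ hc k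
  exact ⟨hcoeff, tendsto_integral_real_of_tendsto_fourierCoeffMeasure hcoeff,
    fun k n _ => norm_correlationMean_sub_fourierCoeffMeasure_sigmaApprox_le hbd k n⟩
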